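/- Let 0 < b < 1 and f > 1 with b + 1/f > 1 (two incoming rarefactions in a head-on interaction of the isentropic p-system, with no vacuum formation). Then the unique B > 0 solving φ←(B) + bf·φ←(B/(bf)) + φ→(f) - f·φ←(b) = 0 satisfies B < 1 and B < bf; that is, the interaction always produces an outgoing backward rarefaction and an outgoing forward rarefaction. -/

import Mathlib

/-!
The shock branch of `φ←` is nonnegative, so `φ←(x) ≥ κ (min x 1 - 1)` and
`a φ←(x / a) ≥ κ (min x a - a)`. Since `b` and `f` lie on rarefaction branches, the
interaction equation then forces `min B 1 + min B (b f) ≤ 2 + 2 b f - 2 f`, which is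
impossible as soon as `B ≥ 1` or `B ≥ b f`, because `b f < f` and `1 < f`.
-/

open Real Set Filter Topology

/-- κ = √γ / α with α = (γ-1)/2. -/
noncomputable def kappa (γ : ℝ) : ℝ := Real.sqrt γ / ((γ - 1) / 2)

/-- The shock branch x ↦ √((1 - x^{-1/α})(x^{γ/α} - 1)), α = (γ-1)/2. -/
noncomputable def shockPart (γ : ℝ) (x : ℝ) : ℝ :=
  Real.sqrt ((1 - x ^ (-(1 : ℝ) / ((γ - 1) / 2))) * (x ^ (γ / ((γ - 1) / 2)) - 1))

/-- Backward auxiliary function φ← : rarefaction branch κ(x-1) for x ≤ 1,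
    shock branch for x ≥ 1 (they agree, with value 0, at x = 1). -/
noncomputable def phiB (γ : ℝ) (x : ℝ) : ℝ :=
  if x ≤ 1 then kappa γ * (x - 1) else shockPart γ x

/-- Forward auxiliary function φ→ : shock branch -√(...) for x ≤ 1,
    rarefaction branch κ(x-1) for x ≥ 1 (they agree, with value 0, at x = 1). -/
noncomputable def phiF (γ : ℝ) (x : ℝ) : ℝ :=
  if x < 1 then -shockPart γ x else kappa γ * (x - 1)

lemma kappa_pos {γ : ℝ} (hγ : 1 < γ) : 0 < kappa γ :=
  div_pos (Real.sqrt_pos.mpr (by linarith)) (by linarith)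

lemma phiB_of_le_one (γ : ℝ) {x : ℝ} (hx : x ≤ 1) : phiB γ x = kappa γ * (x - 1) :=
  if_pos hx

lemma phiF_of_one_le (γ : ℝ) {x : ℝ} (hx : 1 ≤ x) : phiF γ x = kappa γ * (x - 1) :=
  if_neg hx.not_gt

lemma kappa_mul_min_sub_one_le_phiB (γ x : ℝ) :
    kappa γ * (min x 1 - 1) ≤ phiB γ x := by
  rcases le_total x 1 with hx | hx
  · rw [phiB_of_le_one γ hx, min_eq_left hx]
  · rw [min_eq_right hx, sub_self, mul_zero]
    unfold phiB
    split_ifs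
    · rw [le_antisymm ‹x ≤ 1› hx, sub_self, mul_zero]
    · exact Real.sqrt_nonneg _

lemma kappa_mul_min_sub_le_mul_phiB_div (γ x : ℝ) {a : ℝ} (ha : 0 < a) :
    kappa γ * (min x a - a) ≤ a * phiB γ (x / a) := by
  have hmin : min x a = a * min (x / a) 1 := by
    rw [mul_min_of_nonneg _ _ ha.le, mul_div_cancel₀ x ha.ne', mul_one]
  calc kappa γ * (min x a - a) = a * (kappa γ * (min (x / a) 1 - 1)) := by rw [hmin]; ring
    _ ≤ a * phiB γ (x / a) := by
      gcongr
      exact kappa_mul_min_sub_one_le_phiB γ _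

theorem headon_RR_general (γ : ℝ) (hγ : 1 < γ)
    (b f B : ℝ) (hb0 : 0 < b) (hb1 : b < 1) (hf : 1 < f)
    (heq : phiB γ B + b * f * phiB γ (B / (b * f)) + phiF γ f - f * phiB γ b = 0) :
    B < 1 ∧ B < b * f := by
  have hbf : 0 < b * f := mul_pos hb0 (by linarith)
  have hbf_lt : b * f < f := mul_lt_of_lt_one_left (by linarith) hb1
  rw [phiF_of_one_le γ hf.le, phiB_of_le_one γ hb1.le] at heq
  have hmins : kappa γ * (min B 1 + min B (b * f)) ≤ kappa γ * (2 + 2 * (b * f) - 2 * f) := by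
    linarith [kappa_mul_min_sub_one_le_phiB γ B,
      kappa_mul_min_sub_le_mul_phiB_div γ B hbf]
  replace hmins := le_of_mul_le_mul_left hmins (kappa_pos hγ)
  constructor <;> by_contra! h <;>
    rcases min_cases B 1 with h1 | h1 <;> rcases min_cases B (b * f) with h2 | h2 <;> linarith

/-- a head-on interaction of two rarefactions (0 < b < 1, f > 1),
    with no vacuum (b + 1/f > 1), always produces an outgoing backward rarefaction
    (B < 1) and an outgoing forward rarefaction (B < bf). -/
theorem headon_RR (γ : ℝ) (hγ : 1 < γ)
    (b f B : ℝ) (hb0 : 0 < b) (hb1 : b < 1) (hf : 1 < f) (hnovac : 1 < b + 1 / f)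
    (hB : 0 < B)
    (heq : phiB γ B + b * f * phiB γ (B / (b * f)) + phiF γ f - f * phiB γ b = 0) :
    B < 1 ∧ B < b * f :=
  headon_RR_general γ hγ b f B hb0 hb1 hf heq
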